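/- Let q ≥ 2 and V = F_q^{q+1}. The simplex point P spanned by (0,1,1,...,1) is adjacent to a simplex point Q (i.e., the 2-dimensional subspace P + Q is a simplex line) if and only if Q is spanned by a vector (1, a_1, ..., a_q) where a_1, ..., a_q are pairwise distinct elements of F_q. Consequently there are exactly q! simplex points adjacent to P. -/

import Mathlib

/-- A vector of `F^n` is *simplex* if exactly one of its coordinates is zero. -/
def SimplexVec {F : Type*} [Field F] [DecidableEq F] {n : ℕ} (x : Fin n → F) : Prop :=
  (Finset.univ.filter (fun i => x i = 0)).card = 1

/-- A *simplex point* is a 1-dimensional subspace spanned by a simplex vector. -/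
def SimplexPoint {F : Type*} [Field F] [DecidableEq F] {n : ℕ}
    (P : Submodule F (Fin n → F)) : Prop :=
  ∃ x : Fin n → F, SimplexVec x ∧ P = Submodule.span F {x}

/-- A *simplex line* is a 2-dimensional subspace all of whose nonzero vectors
are simplex. -/
def SimplexLine {F : Type*} [Field F] [DecidableEq F] {n : ℕ}
    (L : Submodule F (Fin n → F)) : Prop :=
  Module.finrank F ↥L = 2 ∧ ∀ x ∈ L, x ≠ 0 → SimplexVec x

/-!
Write `e = (0, 1, …, 1)`. The line spanned by `e` and `x = (1, a₁, …, a_q)` consists of the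
vectors `c • e + d • x = (d, c + d a₁, …, c + d a_q)`, and these are all simplex exactly when every
element of `F` is taken by `a` exactly once; as `|F| = q`, this means that the `aᵢ` are pairwise
distinct. Conversely, a simplex point `⟨y⟩ ≠ ⟨e⟩` with `y₀ = 0` is not adjacent to `⟨e⟩`:
`y - y₁ • e` would be a nonzero vector of the line vanishing at coordinates `0` and `1`. So a
neighbour of `⟨e⟩` can be normalised to `⟨(1, a)⟩`, and distinct `a` give distinct points.
-/

open Submodule

section Tuples

variable {F : Type*} [Field F] {n : ℕ}

theorem smul_cons_zero_one_add_smul_cons_one (c d : F) (a : Fin n → F) :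
    c • (Fin.cons 0 1 : Fin (n + 1) → F) + d • Fin.cons 1 a =
      Fin.cons d fun j => c + d * a j := by
  ext i
  cases i using Fin.cases <;> simp

theorem cons_one_notMem_span_cons_zero (a f : Fin n → F) :
    (Fin.cons 1 a : Fin (n + 1) → F) ∉ span F {Fin.cons 0 f} := by
  intro h
  obtain ⟨c, hc⟩ := mem_span_singleton.1 h
  simpa using congrFun hc 0

theorem span_cons_one_injective :
    Function.Injective fun a : Fin n → F => span F {(Fin.cons 1 a : Fin (n + 1) → F)} := by
  intro a b hab
  have hb : (Fin.cons 1 b : Fin (n + 1) → F) ∈ span F {Fin.cons 1 a} := by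
    simp only at hab
    exact hab ▸ mem_span_singleton_self _
  obtain ⟨c, hc⟩ := mem_span_singleton.1 hb
  have hc1 : c = 1 := by simpa using congrFun hc 0
  ext j
  simpa [hc1, eq_comm] using congrFun hc j.succ

theorem span_singleton_eq_span_cons_one {y : Fin (n + 1) → F} (hy0 : y 0 ≠ 0) :
    span F {y} = span F {Fin.cons 1 fun j => (y 0)⁻¹ * y j.succ} := by
  rw [← span_singleton_smul_eq (isUnit_iff_ne_zero.2 (inv_ne_zero hy0)) y]
  congr 2
  ext i
  cases i using Fin.cases <;> simp [hy0]

theorem finrank_span_cons_zero_one_sup [NeZero n] (a : Fin n → F) :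
    Module.finrank F ↥(span F {(Fin.cons 0 1 : Fin (n + 1) → F)} ⊔ span F {Fin.cons 1 a}) = 2 := by
  have he : (Fin.cons 0 1 : Fin (n + 1) → F) ≠ 0 := fun h => by
    simpa only [Fin.cons_succ, Pi.one_apply, Pi.zero_apply, one_ne_zero] using
      congrFun h (Fin.succ 0)
  rw [finrank_sup_span_singleton (cons_one_notMem_span_cons_zero a 1), finrank_span_singleton he]

end Tuples

section Simplex

variable {F : Type*} [Field F] [DecidableEq F] {n : ℕ}

theorem simplexVec_iff_existsUnique {x : Fin n → F} : SimplexVec x ↔ ∃! i, x i = 0 :=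
  (Fintype.existsUnique_iff_card_one _).symm

theorem SimplexVec.eq_of_apply_eq_zero {x : Fin n → F} (hx : SimplexVec x) {i j : Fin n}
    (hi : x i = 0) (hj : x j = 0) : i = j :=
  (simplexVec_iff_existsUnique.1 hx).unique hi hj

theorem simplexVec_cons_zero_iff {f : Fin n → F} :
    SimplexVec (Fin.cons 0 f : Fin (n + 1) → F) ↔ ∀ j, f j ≠ 0 := by
  simp [simplexVec_iff_existsUnique, ExistsUnique, Fin.exists_fin_succ, Fin.forall_fin_succ,
    (Fin.succ_ne_zero _).symm]

theorem simplexVec_cons_iff_of_ne_zero {c : F} (hc : c ≠ 0) {f : Fin n → F} :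
    SimplexVec (Fin.cons c f : Fin (n + 1) → F) ↔ ∃! j, f j = 0 := by
  simp [simplexVec_iff_existsUnique, ExistsUnique, Fin.exists_fin_succ, Fin.forall_fin_succ, hc]

theorem simplexLine_iff_bijective (a : Fin n → F) :
    SimplexLine (span F {(Fin.cons 0 1 : Fin (n + 1) → F)} ⊔ span F {Fin.cons 1 a}) ↔
      Function.Bijective a := by
  rw [← span_insert]
  simp only [SimplexLine, mem_span_pair, forall_exists_index]
  constructor
  · rintro ⟨-, hline⟩
    refine (Function.bijective_iff_existsUnique a).2 fun b => ?_
    have hv := hline _ (-b) 1 rfl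
    rw [smul_cons_zero_one_add_smul_cons_one, simplexVec_cons_iff_of_ne_zero one_ne_zero] at hv
    simpa [neg_add_eq_zero, eq_comm] using hv fun h => one_ne_zero (congrFun h 0)
  · intro hbij
    have : NeZero n := ⟨fun hn => by subst hn; exact (hbij.2 0).elim fun j _ => j.elim0⟩
    refine ⟨by rw [span_insert]; exact finrank_span_cons_zero_one_sup a, ?_⟩
    rintro _ c d rfl hv
    rw [smul_cons_zero_one_add_smul_cons_one] at hv ⊢
    by_cases hd : d = 0
    · subst hd
      have hc : c ≠ 0 := by
        rintro rfl
        exact hv (funext fun i => by cases i using Fin.cases <;> simp)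
      simpa [simplexVec_cons_zero_iff] using hc
    · rw [simplexVec_cons_iff_of_ne_zero hd]
      exact (((Equiv.addLeft c).bijective.comp (Equiv.mulLeft₀ d hd).bijective).comp
        hbij).existsUnique 0

theorem SimplexLine.apply_zero_ne_zero [NeZero n] {y : Fin (n + 1) → F} (hy : SimplexVec y)
    (hne : span F {y} ≠ span F {Fin.cons 0 1})
    (hL : SimplexLine (span F {(Fin.cons 0 1 : Fin (n + 1) → F)} ⊔ span F {y})) : y 0 ≠ 0 := by
  intro hy0
  set j : Fin (n + 1) := Fin.succ 0
  have hyj : y j ≠ 0 := fun h => Fin.succ_ne_zero _ (hy.eq_of_apply_eq_zero h hy0)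
  set v := y - y j • (Fin.cons 0 1 : Fin (n + 1) → F)
  have hvL : v ∈ span F {Fin.cons 0 1} ⊔ span F {y} :=
    sub_mem (mem_sup_right (mem_span_singleton_self y))
      (smul_mem _ _ (mem_sup_left (mem_span_singleton_self _)))
  have hv0 : v 0 = 0 := by simp [v, hy0]
  have hvj : v j = 0 := by
    simp only [v, j, Pi.sub_apply, Pi.smul_apply, Fin.cons_succ, Pi.one_apply, smul_eq_mul,
      mul_one, sub_self]
  have hv : v = 0 := by
    by_contra h
    exact Fin.succ_ne_zero _ ((hL.2 v hvL h).eq_of_apply_eq_zero hvj hv0)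
  apply hne
  rw [sub_eq_zero.1 hv, span_singleton_smul_eq (isUnit_iff_ne_zero.2 hyj)]

variable [Fintype F] (hF : Fintype.card F = n)
include hF

theorem adjacent_cons_zero_one_iff {Q : Submodule F (Fin (n + 1) → F)} (hQ : SimplexPoint Q) :
    (Q ≠ span F {Fin.cons 0 1} ∧ SimplexLine (span F {Fin.cons 0 1} ⊔ Q)) ↔
      ∃ a : Fin n → F, Function.Injective a ∧ Q = span F {Fin.cons 1 a} := by
  have : NeZero n := ⟨hF ▸ Fintype.card_ne_zero⟩
  obtain ⟨y, hy, rfl⟩ := hQ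
  constructor
  · rintro ⟨hne, hL⟩
    have hy0 := hL.apply_zero_ne_zero hy hne
    rw [span_singleton_eq_span_cons_one hy0] at hL ⊢
    exact ⟨_, ((simplexLine_iff_bijective _).1 hL).injective, rfl⟩
  · rintro ⟨a, ha, hQ⟩
    rw [hQ]
    exact ⟨fun h => cons_one_notMem_span_cons_zero a 1 (h ▸ mem_span_singleton_self _),
      (simplexLine_iff_bijective a).2
        ((Fintype.bijective_iff_injective_and_card a).2 ⟨ha, by simp [hF]⟩)⟩

theorem card_adjacent_cons_zero_one :
    Nat.card {Q : Submodule F (Fin (n + 1) → F) // SimplexPoint Q ∧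
      Q ≠ span F {Fin.cons 0 1} ∧ SimplexLine (span F {Fin.cons 0 1} ⊔ Q)} = n.factorial := by
  have hrange : ∀ Q : Submodule F (Fin (n + 1) → F), (SimplexPoint Q ∧
      Q ≠ span F {Fin.cons 0 1} ∧ SimplexLine (span F {Fin.cons 0 1} ⊔ Q)) ↔
      Q ∈ Set.range fun a : Fin n ↪ F => span F {Fin.cons 1 ⇑a} := by
    intro Q
    constructor
    · rintro ⟨hQ, hadj⟩
      obtain ⟨a, ha, rfl⟩ := (adjacent_cons_zero_one_iff hF hQ).1 hadj
      exact ⟨⟨a, ha⟩, rfl⟩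
    · rintro ⟨a, rfl⟩
      have ha : Function.Bijective a :=
        (Fintype.bijective_iff_injective_and_card a).2 ⟨a.injective, by simp [hF]⟩
      have hQ : SimplexPoint (span F {(Fin.cons 1 ⇑a : Fin (n + 1) → F)}) :=
        ⟨_, (simplexVec_cons_iff_of_ne_zero one_ne_zero).2 (ha.existsUnique 0), rfl⟩
      exact ⟨hQ, (adjacent_cons_zero_one_iff hF hQ).2 ⟨a, a.injective, rfl⟩⟩
  rw [Nat.card_congr (Equiv.subtypeEquivRight hrange),
    Nat.card_range_of_injective fun a b h => DFunLike.coe_injective (span_cons_one_injective h),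
    Nat.card_eq_fintype_card, Fintype.card_embedding_eq, hF, Fintype.card_fin,
    Nat.descFactorial_self]

end Simplex

theorem adjacency_with_standard_simplex_point_general
    (F : Type*) [Field F] [Fintype F] [DecidableEq F] (q : ℕ)
    (hF : Fintype.card F = q) :
    (∀ Q : Submodule F (Fin (q + 1) → F), SimplexPoint Q →
      ((Q ≠ Submodule.span F {fun i : Fin (q + 1) => if i = 0 then (0 : F) else 1} ∧
          SimplexLine
            (Submodule.span F {fun i : Fin (q + 1) => if i = 0 then (0 : F) else 1} ⊔ Q)) ↔
        ∃ a : Fin q → F, Function.Injective a ∧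
          Q = Submodule.span F {Fin.cons (1 : F) a})) ∧
    Nat.card {Q : Submodule F (Fin (q + 1) → F) //
        SimplexPoint Q ∧
        Q ≠ Submodule.span F {fun i : Fin (q + 1) => if i = 0 then (0 : F) else 1} ∧
        SimplexLine
          (Submodule.span F {fun i : Fin (q + 1) => if i = 0 then (0 : F) else 1} ⊔ Q)} =
      Nat.factorial q := by
  have he : (fun i : Fin (q + 1) => if i = 0 then (0 : F) else 1) = Fin.cons 0 1 := by
    ext i
    cases i using Fin.cases <;> simp [Fin.succ_ne_zero]
  rw [he]
  exact ⟨fun Q => adjacent_cons_zero_one_iff hF, card_adjacent_cons_zero_one hF⟩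

/-- The simplex point spanned by `(0,1,…,1)` is adjacent to a simplex point `Q`
iff `Q` is spanned by `(1, a_1, …, a_q)` with the `a_i` pairwise distinct;
consequently exactly `q!` simplex points are adjacent to it. -/
theorem adjacency_with_standard_simplex_point
    (F : Type*) [Field F] [Fintype F] [DecidableEq F] (q : ℕ) (hq : 2 ≤ q)
    (hF : Fintype.card F = q) :
    (∀ Q : Submodule F (Fin (q + 1) → F), SimplexPoint Q →
      ((Q ≠ Submodule.span F {fun i : Fin (q + 1) => if i = 0 then (0 : F) else 1} ∧
          SimplexLine
            (Submodule.span F {fun i : Fin (q + 1) => if i = 0 then (0 : F) else 1} ⊔ Q)) ↔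
        ∃ a : Fin q → F, Function.Injective a ∧
          Q = Submodule.span F {Fin.cons (1 : F) a})) ∧
    Nat.card {Q : Submodule F (Fin (q + 1) → F) //
        SimplexPoint Q ∧
        Q ≠ Submodule.span F {fun i : Fin (q + 1) => if i = 0 then (0 : F) else 1} ∧
        SimplexLine
          (Submodule.span F {fun i : Fin (q + 1) => if i = 0 then (0 : F) else 1} ⊔ Q)} =
      Nat.factorial q :=
  adjacency_with_standard_simplex_point_general F q hF
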